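/- If a compact LOTS X is monotonically countably metacompact, then X is monotonically countably compact: every countable open cover U admits a finite open refinement s(U) covering X such that U ≺ V implies s(U) ≺ s(V). -/

import Mathlib

open Set TopologicalSpace

def PointFinite {X : Type*} (C : Set (Set X)) : Prop :=
  ∀ x : X, {U ∈ C | x ∈ U}.Finite

def Refines {X : Type*} (A B : Set (Set X)) : Prop :=
  ∀ U ∈ A, ∃ V ∈ B, U ⊆ V

def IsOpenCoverSets {X : Type*} [TopologicalSpace X] (C : Set (Set X)) : Prop :=
  (∀ U ∈ C, IsOpen U) ∧ ⋃₀ C = Set.univ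

def MonotonicallyMetacompact (X : Type*) [TopologicalSpace X] : Prop :=
  ∃ r : Set (Set X) → Set (Set X),
    (∀ U, IsOpenCoverSets U →
      IsOpenCoverSets (r U) ∧ PointFinite (r U) ∧ Refines (r U) U) ∧
    (∀ U V, IsOpenCoverSets U → IsOpenCoverSets V → Refines U V → Refines (r U) (r V))

def MonotonicallyCountablyMetacompact (X : Type*) [TopologicalSpace X] : Prop :=
  ∃ r : Set (Set X) → Set (Set X),
    (∀ U, IsOpenCoverSets U → U.Countable →
      IsOpenCoverSets (r U) ∧ PointFinite (r U) ∧ Refines (r U) U) ∧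
    (∀ U V, IsOpenCoverSets U → IsOpenCoverSets V → U.Countable → V.Countable →
      Refines U V → Refines (r U) (r V))

def IsPerfectSpace (X : Type*) [TopologicalSpace X] : Prop :=
  ∀ C : Set X, IsClosed C → ∃ f : ℕ → Set X, (∀ n, IsOpen (f n)) ∧ C = ⋂ n, f n

def St {X : Type*} (x : X) (C : Set (Set X)) : Set X := ⋃₀ {G ∈ C | x ∈ G}

def IsDevelopment {X : Type*} [TopologicalSpace X] (G : ℕ → Set (Set X)) : Prop :=
  (∀ n, IsOpenCoverSets (G n)) ∧
  ∀ x : X, ∀ U : Set X, IsOpen U → x ∈ U → ∃ n, St x (G n) ⊆ U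

def IsMooreSpace (X : Type*) [TopologicalSpace X] : Prop :=
  RegularSpace X ∧ T1Space X ∧ ∃ G : ℕ → Set (Set X), IsDevelopment G

def Metacompact (X : Type*) [TopologicalSpace X] : Prop :=
  ∀ U : Set (Set X), IsOpenCoverSets U →
    ∃ V, IsOpenCoverSets V ∧ PointFinite V ∧ Refines V U

/-!
Replace `r U` by the order-convex components of its members: this is still a point-finite open
refinement of `U`, monotone in `U`, and now consists of convex sets. Let `s U` be its maximal
members. By point-finiteness every member lies below a maximal one, so `s U` covers `X` and
`s` stays monotone. Finally `s U` is finite: take a finite subcover `t ⊆ s U`. Any other member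
`D` of `s U` meets some `C ∈ t` without lying inside it, so the convex set `D` contains `sup C` or
`inf C`. Only finitely many members of a point-finite family contain one of these finitely many
points.
-/

section Refinement

variable {X : Type*} {A B C : Set (Set X)}

theorem Refines.refl (A : Set (Set X)) : Refines A A :=
  fun U hU => ⟨U, hU, subset_rfl⟩

theorem refines_of_subset (h : A ⊆ B) : Refines A B :=
  fun U hU => ⟨U, h hU, subset_rfl⟩

theorem Refines.trans (hAB : Refines A B) (hBC : Refines B C) : Refines A C := by
  intro U hU
  obtain ⟨V, hV, hUV⟩ := hAB U hU
  obtain ⟨W, hW, hVW⟩ := hBC V hV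
  exact ⟨W, hW, hUV.trans hVW⟩

theorem Refines.sUnion_eq_univ (hAB : Refines A B) (hA : ⋃₀ A = univ) : ⋃₀ B = univ := by
  refine eq_univ_of_forall fun x => ?_
  obtain ⟨U, hU, hxU⟩ := hA ▸ mem_univ x
  obtain ⟨V, hV, hUV⟩ := hAB U hU
  exact ⟨V, hV, hUV hxU⟩

theorem PointFinite.subset (hB : PointFinite B) (hAB : A ⊆ B) : PointFinite A :=
  fun x => (hB x).subset fun _ hU => ⟨hAB hU.1, hU.2⟩

def maximalMembers (A : Set (Set X)) : Set (Set X) :=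
  {C | Maximal (· ∈ A) C}

theorem maximalMembers_subset : maximalMembers A ⊆ A :=
  fun _ hC => hC.prop

theorem PointFinite.refines_maximalMembers (hB : PointFinite B) (hne : ∀ V ∈ B, V.Nonempty)
    (hAB : Refines A B) : Refines A (maximalMembers B) := by
  intro U hU
  obtain ⟨V, hV, hUV⟩ := hAB U hU
  obtain ⟨x, hx⟩ := hne V hV
  obtain ⟨W, hVW, hW⟩ := (hB x).exists_le_maximal ⟨hV, hx⟩
  -- `W` is maximal among the members containing `x`, and every member above `W` contains `x`.
  exact ⟨W, ⟨hW.prop.1, fun W' hW' hWW' => hW.2 ⟨hW', hWW' hW.prop.2⟩ hWW'⟩, hUV.trans hVW⟩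

end Refinement

section ConvexComponents

variable {X : Type*} [LinearOrder X] {A B : Set (Set X)} {C : Set X}

def ordConnectedComponents (A : Set (Set X)) : Set (Set X) :=
  {C | ∃ G ∈ A, ∃ x ∈ G, ordConnectedComponent G x = C}

theorem nonempty_of_mem_ordConnectedComponents (hC : C ∈ ordConnectedComponents A) :
    C.Nonempty := by
  obtain ⟨G, -, x, hx, rfl⟩ := hC
  exact ⟨x, self_mem_ordConnectedComponent.2 hx⟩

theorem ordConnected_of_mem_ordConnectedComponents (hC : C ∈ ordConnectedComponents A) :
    C.OrdConnected := by
  obtain ⟨G, -, x, -, rfl⟩ := hC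
  infer_instance

theorem ordConnectedComponents_refines : Refines (ordConnectedComponents A) A := by
  rintro C ⟨G, hG, x, -, rfl⟩
  exact ⟨G, hG, ordConnectedComponent_subset⟩

theorem sUnion_ordConnectedComponents : ⋃₀ ordConnectedComponents A = ⋃₀ A := by
  refine Subset.antisymm ?_ ?_
  · rintro x ⟨C, hC, hxC⟩
    obtain ⟨G, hG, hCG⟩ := ordConnectedComponents_refines C hC
    exact ⟨G, hG, hCG hxC⟩
  · rintro x ⟨G, hG, hxG⟩
    exact ⟨_, ⟨G, hG, x, hxG, rfl⟩, self_mem_ordConnectedComponent.2 hxG⟩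

theorem PointFinite.ordConnectedComponents (h : PointFinite A) :
    PointFinite (ordConnectedComponents A) := by
  intro x
  refine ((h x).image fun G => ordConnectedComponent G x).subset ?_
  rintro C ⟨⟨G, hG, y, -, rfl⟩, hxC⟩
  exact ⟨G, ⟨hG, ordConnectedComponent_subset hxC⟩, (ordConnectedComponent_eq hxC).symm⟩

theorem Refines.ordConnectedComponents (h : Refines A B) :
    Refines (ordConnectedComponents A) (ordConnectedComponents B) := by
  rintro C ⟨G, hG, x, hx, rfl⟩
  obtain ⟨H, hH, hGH⟩ := h G hG
  exact ⟨_, ⟨H, hH, x, hGH hx, rfl⟩,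
    subset_ordConnectedComponent (self_mem_ordConnectedComponent.2 hx)
      (ordConnectedComponent_subset.trans hGH)⟩

theorem IsOpen.ordConnectedComponent [TopologicalSpace X] [OrderTopology X] {G : Set X}
    (hG : IsOpen G) (x : X) : IsOpen (ordConnectedComponent G x) := by
  refine isOpen_iff_mem_nhds.2 fun y hy => ?_
  rw [ordConnectedComponent_eq hy]
  exact ordConnectedComponent_mem_nhds.2 (hG.mem_nhds (ordConnectedComponent_subset hy))

theorem isOpen_of_mem_ordConnectedComponents [TopologicalSpace X] [OrderTopology X]
    (h : ∀ G ∈ A, IsOpen G) (hC : C ∈ ordConnectedComponents A) : IsOpen C := by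
  obtain ⟨G, hG, x, -, rfl⟩ := hC
  exact (h G hG).ordConnectedComponent x

end ConvexComponents

section CompactLinearOrder

variable {X : Type*} [LinearOrder X]

theorem Set.OrdConnected.mem_upperBounds_or_mem_lowerBounds {C : Set X} (hC : C.OrdConnected)
    {m : X} (hm : m ∉ C) : m ∈ upperBounds C ∨ m ∈ lowerBounds C := by
  by_contra! h
  simp only [mem_upperBounds, mem_lowerBounds, not_forall, not_le, exists_prop] at h
  obtain ⟨⟨a, ha, hma⟩, b, hb, hbm⟩ := h
  exact hm (hC.out hb ha ⟨hbm.le, hma.le⟩)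

theorem Set.OrdConnected.mem_of_isLUB_or_mem_of_isGLB {C D : Set X} (hC : C.OrdConnected)
    (hD : D.OrdConnected) (hCD : (C ∩ D).Nonempty) (hDC : ¬D ⊆ C) {a b : X} (ha : IsLUB C a)
    (hb : IsGLB C b) : a ∈ D ∨ b ∈ D := by
  obtain ⟨c, hcC, hcD⟩ := hCD
  obtain ⟨m, hmD, hmC⟩ := not_subset.1 hDC
  rcases hC.mem_upperBounds_or_mem_lowerBounds hmC with hm | hm
  · exact Or.inl (hD.out hcD hmD ⟨ha.1 hcC, ha.2 hm⟩)
  · exact Or.inr (hD.out hmD hcD ⟨hb.2 hm, hb.1 hcC⟩)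

variable [TopologicalSpace X] [OrderClosedTopology X] [CompactSpace X]

theorem exists_isLUB_of_compactSpace {C : Set X} (hC : C.Nonempty) : ∃ a, IsLUB C a := by
  obtain ⟨a, -, ha⟩ := isClosed_closure.isCompact.exists_isLUB hC.closure
  exact ⟨a, by rwa [IsLUB, upperBounds_closure] at ha⟩

theorem exists_isGLB_of_compactSpace {C : Set X} (hC : C.Nonempty) : ∃ b, IsGLB C b := by
  obtain ⟨b, -, hb⟩ := isClosed_closure.isCompact.exists_isGLB hC.closure
  exact ⟨b, by rwa [IsGLB, lowerBounds_closure] at hb⟩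

theorem IsAntichain.finite_of_pointFinite {M : Set (Set X)} (hanti : IsAntichain (· ⊆ ·) M)
    (hpf : PointFinite M) (hop : ∀ C ∈ M, IsOpen C) (hoc : ∀ C ∈ M, C.OrdConnected)
    (hcov : ⋃₀ M = univ) : M.Finite := by
  obtain ⟨t, htM, htfin, htcov⟩ :=
    isCompact_univ.elim_finite_subcover_image (c := id) hop (by simp [← sUnion_eq_biUnion, hcov])
  set P : Set X := ⋃ C ∈ t, ({a | IsLUB C a} ∪ {b | IsGLB C b})
  have hPfin : P.Finite := htfin.biUnion fun C _ =>
    (Set.Subsingleton.finite fun _ ha _ hb => IsLUB.unique ha hb).union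
      (Set.Subsingleton.finite fun _ ha _ hb => IsGLB.unique ha hb)
  refine (((htfin.union (hPfin.biUnion fun p _ => hpf p))).insert ∅).subset fun D hD => ?_
  rcases D.eq_empty_or_nonempty with rfl | ⟨x, hxD⟩
  · exact mem_insert _ _
  by_cases hDt : D ∈ t
  · exact Or.inr (Or.inl hDt)
  obtain ⟨C, hCt, hxC⟩ := mem_iUnion₂.1 (htcov (mem_univ x))
  have hDC : ¬D ⊆ C := fun h => hDt (hanti.eq hD (htM hCt) h ▸ hCt)
  obtain ⟨a, ha⟩ := exists_isLUB_of_compactSpace ⟨x, hxC⟩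
  obtain ⟨b, hb⟩ := exists_isGLB_of_compactSpace ⟨x, hxC⟩
  refine Or.inr (Or.inr ?_)
  rcases (hoc C (htM hCt)).mem_of_isLUB_or_mem_of_isGLB (hoc D hD) ⟨x, hxC, hxD⟩ hDC ha hb
    with h | h
  · exact mem_biUnion (mem_biUnion hCt (Or.inl ha)) ⟨hD, h⟩
  · exact mem_biUnion (mem_biUnion hCt (Or.inr hb)) ⟨hD, h⟩

end CompactLinearOrder

theorem stmt11 {X : Type*} [LinearOrder X] [TopologicalSpace X] [OrderTopology X]
    [CompactSpace X] (h : MonotonicallyCountablyMetacompact X) :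
    ∃ s : Set (Set X) → Set (Set X),
      (∀ U, IsOpenCoverSets U → U.Countable →
        IsOpenCoverSets (s U) ∧ (s U).Finite ∧ Refines (s U) U) ∧
      (∀ U V, IsOpenCoverSets U → IsOpenCoverSets V → U.Countable → V.Countable → Refines U V →
        Refines (s U) (s V)) := by
  obtain ⟨r, hr, hr_mono⟩ := h
  refine ⟨fun U => maximalMembers (ordConnectedComponents (r U)), fun U hU hUc => ?_,
    fun U V hU hV hUc hVc hUV => ?_⟩
  · obtain ⟨⟨hop, hcov⟩, hpf, href⟩ := hr U hU hUc
    have hpf' := hpf.ordConnectedComponents.subset maximalMembers_subset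
    have hcov' : ⋃₀ maximalMembers (ordConnectedComponents (r U)) = univ :=
      (hpf.ordConnectedComponents.refines_maximalMembers
        (fun _ => nonempty_of_mem_ordConnectedComponents) (Refines.refl _)).sUnion_eq_univ
        (sUnion_ordConnectedComponents.trans hcov)
    have hop' : ∀ C ∈ maximalMembers (ordConnectedComponents (r U)), IsOpen C :=
      fun C hC => isOpen_of_mem_ordConnectedComponents hop (maximalMembers_subset hC)
    refine ⟨⟨hop', hcov'⟩, ?_, ?_⟩
    · exact (setOfPred_maximal_antichain _).finite_of_pointFinite hpf' hop'
        (fun C hC => ordConnected_of_mem_ordConnectedComponents (maximalMembers_subset hC)) hcov'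
    · exact (refines_of_subset maximalMembers_subset).trans
        (ordConnectedComponents_refines.trans href)
  · obtain ⟨-, hpfV, -⟩ := hr V hV hVc
    exact (refines_of_subset maximalMembers_subset).trans
      (hpfV.ordConnectedComponents.refines_maximalMembers
        (fun _ => nonempty_of_mem_ordConnectedComponents)
        (hr_mono U V hU hV hUc hVc hUV).ordConnectedComponents)
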